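/- Conversely, let K ⊆ M be closed convex and n a unit vector such that σn ∈ ∂K(n) where K(n) = {τn : τ ∈ K}. Then for any nonzero d in the normal cone of K(n) at σn, the symmetric matrix n ⊙ d = (n⊗d + d⊗n)/2 lies in the normal cone of K at σ. -/

import Mathlib

open Matrix

/-
For symmetric `A`, the trace pairing of `A` with `n ⊙ d` is `(A n) · d`. Applied to `A = σ - τ`, the
condition that `n ⊙ d` is normal to `K` at `σ` becomes `(σ n - τ n) · d ≥ 0` for all `τ ∈ K`,
which is exactly the statement that `d` is normal to `K(n)` at `σ n`.
-/

theorem Matrix.IsSymm.trace_transpose_mul_symmetrized_vecMulVec {ι R : Type*} [Fintype ι]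
    [Field R] [NeZero (2 : R)] {A : Matrix ι ι R} (hA : A.IsSymm) (u v : ι → R) :
    trace (Aᵀ * ((1/2 : R) • (vecMulVec u v + vecMulVec v u))) = (A *ᵥ u) ⬝ᵥ v := by
  have hswap : (A *ᵥ v) ⬝ᵥ u = (A *ᵥ u) ⬝ᵥ v := by
    rw [dotProduct_comm, dotProduct_mulVec, ← vecMul_transpose, hA.eq]
  rw [hA.eq, Matrix.mul_smul, Matrix.mul_add, trace_smul, trace_add, mul_vecMulVec,
    mul_vecMulVec, trace_vecMulVec, trace_vecMulVec, hswap, smul_eq_mul]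
  field_simp
  ring

theorem boundary_stress_vector_gives_jump_compatible_normal_general
    (K : Set (Matrix (Fin 3) (Fin 3) ℝ))
    (hK_symm : ∀ τ ∈ K, τ.IsSymm)
    (σ : Matrix (Fin 3) (Fin 3) ℝ) (hσK : σ ∈ K)
    (n : Fin 3 → ℝ)
    (d : Fin 3 → ℝ)
    (hnc : ∀ v ∈ {v : Fin 3 → ℝ | ∃ τ ∈ K, τ *ᵥ n = v}, (0 : ℝ) ≤ (σ *ᵥ n - v) ⬝ᵥ d) :
    ∀ τ ∈ K, (0 : ℝ) ≤
      Matrix.trace ((σ - τ)ᵀ * ((1/2 : ℝ) • (vecMulVec n d + vecMulVec d n))) := by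
  intro τ hτ
  rw [((hK_symm σ hσK).sub (hK_symm τ hτ)).trace_transpose_mul_symmetrized_vecMulVec, sub_mulVec]
  exact hnc _ ⟨τ, hτ, rfl⟩

/-- Converse: if `σ ∈ K` (closed convex set of symmetric matrices), `n` is a
unit vector with `σn` on the boundary of `K(n) = {τn : τ ∈ K}`, and `d ≠ 0`
lies in the normal cone of `K(n)` at `σn`, then the symmetric matrix
`n ⊙ d = (n⊗d + d⊗n)/2` lies in the normal cone of `K` at `σ`. -/
theorem boundary_stress_vector_gives_jump_compatible_normal
    (K : Set (Matrix (Fin 3) (Fin 3) ℝ))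
    (hK_symm : ∀ τ ∈ K, τ.IsSymm)
    (hK_closed : IsClosed K) (hK_conv : Convex ℝ K)
    (σ : Matrix (Fin 3) (Fin 3) ℝ) (hσK : σ ∈ K)
    (n : Fin 3 → ℝ) (hn : n ⬝ᵥ n = 1)
    (hfr : σ *ᵥ n ∈ frontier {v | ∃ τ ∈ K, τ *ᵥ n = v})
    (d : Fin 3 → ℝ) (hd : d ≠ 0)
    (hnc : ∀ v ∈ {v : Fin 3 → ℝ | ∃ τ ∈ K, τ *ᵥ n = v}, (0 : ℝ) ≤ (σ *ᵥ n - v) ⬝ᵥ d) :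
    ∀ τ ∈ K, (0 : ℝ) ≤
      Matrix.trace ((σ - τ)ᵀ * ((1/2 : ℝ) • (vecMulVec n d + vecMulVec d n))) :=
  boundary_stress_vector_gives_jump_compatible_normal_general K hK_symm σ hσK n d hnc
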